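/- Let p be a distribution, ε > 0, and n ∈ ℕ such that i·λ_i(p) ≤ ε for all i ≥ n+1. Let G ∈ [0,1]^n satisfy |G_i − i·λ_i(p)| ≤ ε for all i ∈ {1,...,n}. Then for every strategy q, |A(p,q) − Σ_{i=1}^{n} U_{i−1}(q)·(q_i/i)·G_i| ≤ ε. -/

import Mathlib

/-!
Writing `w_j = U_j q_{j+1} / (j+1) = U_j - U_{j+1}`, the weights `w_j` are nonnegative and
telescope, so their partial sums are `1 - U_N ≤ 1`. Both `A(p,q)` and the finite sum are `w`-weighted
sums, of `(j+1) λ_{j+1}` and of `G_{j+1}` (cut off at `j < n`), and termwise these differ by at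
most `ε`: by the hypothesis on `G` for `j < n`, and by `0 ≤ (j+1) λ_{j+1} ≤ ε` beyond.
-/

open scoped BigOperators

/-- `lam p i = Σ_{l=i}^∞ p_l / l`. -/
noncomputable def lam (p : ℕ → ℝ) (i : ℕ) : ℝ := ∑' l : ℕ, if i ≤ l then p l / (l : ℝ) else 0

/-- `U q i = ∏_{l=1}^i (1 - q_l / l)`, with `U q 0 = 1`. -/
noncomputable def U (q : ℕ → ℝ) (i : ℕ) : ℝ := ∏ l ∈ Finset.Icc 1 i, (1 - q l / (l : ℝ))

/-- `A p q = Σ_{i=1}^∞ U_{i-1}(q) q_i λ_i(p)`. -/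
noncomputable def A (p q : ℕ → ℝ) : ℝ := ∑' i : ℕ, U q i * q (i + 1) * lam p (i + 1)

noncomputable def stopProb (q : ℕ → ℝ) (j : ℕ) : ℝ := U q j * (q (j + 1) / ((j + 1 : ℕ) : ℝ))

@[simp]
theorem U_zero (q : ℕ → ℝ) : U q 0 = 1 := by
  simp [U]

theorem U_succ (q : ℕ → ℝ) (j : ℕ) :
    U q (j + 1) = U q j * (1 - q (j + 1) / ((j + 1 : ℕ) : ℝ)) :=
  Finset.prod_Icc_succ_top (by omega) _

theorem stopProb_eq_sub (q : ℕ → ℝ) (j : ℕ) : stopProb q j = U q j - U q (j + 1) := by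
  rw [stopProb, U_succ]
  ring

theorem sum_range_stopProb (q : ℕ → ℝ) (N : ℕ) :
    ∑ j ∈ Finset.range N, stopProb q j = 1 - U q N := by
  simp only [stopProb_eq_sub, Finset.sum_range_sub', U_zero]

theorem div_cast_mem_Icc {q : ℕ → ℝ} (hq : ∀ i, 1 ≤ i → q i ∈ Set.Icc (0 : ℝ) 1) {l : ℕ}
    (hl : 1 ≤ l) : q l / (l : ℝ) ∈ Set.Icc (0 : ℝ) 1 := by
  obtain ⟨h0, h1⟩ := hq l hl
  have hl' : (1 : ℝ) ≤ l := by exact_mod_cast hl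
  exact ⟨by positivity, (div_le_one (by positivity)).2 (h1.trans hl')⟩

theorem U_nonneg {q : ℕ → ℝ} (hq : ∀ i, 1 ≤ i → q i ∈ Set.Icc (0 : ℝ) 1) (j : ℕ) :
    0 ≤ U q j :=
  Finset.prod_nonneg fun _ hl => sub_nonneg.2 (div_cast_mem_Icc hq (Finset.mem_Icc.1 hl).1).2

theorem stopProb_nonneg {q : ℕ → ℝ} (hq : ∀ i, 1 ≤ i → q i ∈ Set.Icc (0 : ℝ) 1) (j : ℕ) :
    0 ≤ stopProb q j :=
  mul_nonneg (U_nonneg hq j) (div_cast_mem_Icc hq (Nat.le_add_left 1 j)).1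

theorem sum_range_stopProb_le_one {q : ℕ → ℝ} (hq : ∀ i, 1 ≤ i → q i ∈ Set.Icc (0 : ℝ) 1)
    (N : ℕ) : ∑ j ∈ Finset.range N, stopProb q j ≤ 1 := by
  rw [sum_range_stopProb]
  linarith [U_nonneg hq N]

theorem summable_stopProb {q : ℕ → ℝ} (hq : ∀ i, 1 ≤ i → q i ∈ Set.Icc (0 : ℝ) 1) :
    Summable (stopProb q) :=
  summable_of_sum_range_le (stopProb_nonneg hq) (sum_range_stopProb_le_one hq)

theorem tsum_stopProb_le_one {q : ℕ → ℝ} (hq : ∀ i, 1 ≤ i → q i ∈ Set.Icc (0 : ℝ) 1) :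
    ∑' j, stopProb q j ≤ 1 :=
  Real.tsum_le_of_sum_range_le (stopProb_nonneg hq) (sum_range_stopProb_le_one hq)

theorem A_eq_tsum_stopProb_mul (p q : ℕ → ℝ) :
    A p q = ∑' j, stopProb q j * (((j + 1 : ℕ) : ℝ) * lam p (j + 1)) := by
  refine tsum_congr fun j => ?_
  have hj : ((j + 1 : ℕ) : ℝ) ≠ 0 := by positivity
  rw [stopProb]
  field_simp

theorem sum_Icc_eq_sum_range_stopProb_mul (q G : ℕ → ℝ) (n : ℕ) :
    ∑ i ∈ Finset.Icc 1 n, U q (i - 1) * (q i / (i : ℝ)) * G i =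
      ∑ j ∈ Finset.range n, stopProb q j * G (j + 1) := by
  rw [← Finset.Ico_add_one_right_eq_Icc, Finset.sum_Ico_eq_sum_range, Nat.add_sub_cancel]
  refine Finset.sum_congr rfl fun j _ => ?_
  rw [add_comm 1 j, Nat.add_sub_cancel, stopProb]

theorem lam_nonneg {p : ℕ → ℝ} (hp : ∀ i, 1 ≤ i → 0 ≤ p i) (i : ℕ) : 0 ≤ lam p i := by
  refine tsum_nonneg fun l => ?_
  split_ifs
  · rcases l with _ | l
    · simp
    · exact div_nonneg (hp _ (Nat.le_add_left 1 l)) (Nat.cast_nonneg _)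
  · exact le_rfl

section WeightedSum

variable {w g : ℕ → ℝ} {ε : ℝ}

theorem norm_mul_le_mul_of_abs_le {j : ℕ} (hw0 : 0 ≤ w j) (hg : |g j| ≤ ε) :
    ‖w j * g j‖ ≤ ε * w j := by
  rw [Real.norm_eq_abs, abs_mul, abs_of_nonneg hw0, mul_comm]
  exact mul_le_mul_of_nonneg_right hg hw0

theorem summable_mul_of_abs_le (hw0 : ∀ j, 0 ≤ w j) (hw : Summable w) (hg : ∀ j, |g j| ≤ ε) :
    Summable fun j => w j * g j :=
  (hw.mul_left ε).of_norm_bounded fun j => norm_mul_le_mul_of_abs_le (hw0 j) (hg j)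

theorem abs_tsum_mul_le_of_abs_le (hw0 : ∀ j, 0 ≤ w j) (hw : Summable w)
    (hg : ∀ j, |g j| ≤ ε) : |∑' j, w j * g j| ≤ ε * ∑' j, w j := by
  rw [← Real.norm_eq_abs]
  exact tsum_of_norm_bounded (hw.hasSum.mul_left ε) fun j =>
    norm_mul_le_mul_of_abs_le (hw0 j) (hg j)

end WeightedSum

theorem stmt7_general (p : ℕ → ℝ) (hp : ∀ i, 1 ≤ i → 0 ≤ p i)
    (ε : ℝ) (hε : 0 < ε) (n : ℕ)
    (htail : ∀ i, n + 1 ≤ i → (i : ℝ) * lam p i ≤ ε)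
    (G : ℕ → ℝ)
    (hG : ∀ i, 1 ≤ i → i ≤ n → |G i - (i : ℝ) * lam p i| ≤ ε)
    (q : ℕ → ℝ) (hq : ∀ i, 1 ≤ i → q i ∈ Set.Icc (0 : ℝ) 1) :
    |A p q - ∑ i ∈ Finset.Icc 1 n, U q (i - 1) * (q i / (i : ℝ)) * G i| ≤ ε := by
  set G' : ℕ → ℝ := fun j => if j < n then G (j + 1) else 0
  set err : ℕ → ℝ := fun j => ((j + 1 : ℕ) : ℝ) * lam p (j + 1) - G' j
  have herr : ∀ j, |err j| ≤ ε := by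
    intro j
    by_cases hj : j < n
    · simp only [err, G', if_pos hj, abs_sub_comm]
      exact hG (j + 1) (by omega) (by omega)
    · have h0 : 0 ≤ ((j + 1 : ℕ) : ℝ) * lam p (j + 1) :=
        mul_nonneg (Nat.cast_nonneg _) (lam_nonneg hp _)
      simp only [err, G', if_neg hj, sub_zero, abs_of_nonneg h0]
      exact htail (j + 1) (by omega)
  have hG'_support : ∀ j ∉ Finset.range n, stopProb q j * G' j = 0 := fun j hj => by
    simp_all [G']
  have hsum : ∑ j ∈ Finset.range n, stopProb q j * G (j + 1) = ∑' j, stopProb q j * G' j := by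
    rw [tsum_eq_sum hG'_support]
    exact Finset.sum_congr rfl fun j hj => by simp_all [G']
  have hA : A p q = ∑' j, stopProb q j * err j + ∑' j, stopProb q j * G' j := by
    rw [A_eq_tsum_stopProb_mul, ← Summable.tsum_add
      (summable_mul_of_abs_le (stopProb_nonneg hq) (summable_stopProb hq) herr)
      (summable_of_ne_finset_zero hG'_support)]
    exact tsum_congr fun j => by simp only [err]; ring
  rw [sum_Icc_eq_sum_range_stopProb_mul, hsum, hA, add_sub_cancel_right]
  calc |∑' j, stopProb q j * err j| ≤ ε * ∑' j, stopProb q j :=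
        abs_tsum_mul_le_of_abs_le (stopProb_nonneg hq) (summable_stopProb hq) herr
    _ ≤ ε := mul_le_of_le_one_right hε.le (tsum_stopProb_le_one hq)

theorem stmt7 (p : ℕ → ℝ) (hp : ∀ i, 1 ≤ i → 0 ≤ p i)
    (hps : HasSum (fun i : ℕ => p (i + 1)) 1)
    (ε : ℝ) (hε : 0 < ε) (n : ℕ)
    (htail : ∀ i, n + 1 ≤ i → (i : ℝ) * lam p i ≤ ε)
    (G : ℕ → ℝ) (hG01 : ∀ i, 1 ≤ i → i ≤ n → G i ∈ Set.Icc (0 : ℝ) 1)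
    (hG : ∀ i, 1 ≤ i → i ≤ n → |G i - (i : ℝ) * lam p i| ≤ ε)
    (q : ℕ → ℝ) (hq : ∀ i, 1 ≤ i → q i ∈ Set.Icc (0 : ℝ) 1) :
    |A p q - ∑ i ∈ Finset.Icc 1 n, U q (i - 1) * (q i / (i : ℝ)) * G i| ≤ ε :=
  stmt7_general p hp ε hε n htail G hG q hq
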